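/- Let P_n be the monic orthogonal polynomials (P₀ = 1, P₁(z) = z, P_{n+1}(z) = z P_n(z) + β_n P_{n-1}(z), β_n = h_n/h_{n-1}) and define the kernel K_n(x,y) = Σ_{k=0}^{n} P_k(x) conj(P_k(y)) / h_k for pure quaternions x, y, where h_k = n!(n+2) for odd k and (k+1)! for even k. Then the Christoffel–Darboux identity holds: x K_n(x,y) + K_n(x,y) conj(y) = (P_{n+1}(x) conj(P_n(y)) + P_n(x) conj(P_{n+1}(y))) / h_n. -/
import Mathlib


open Polynomial Quaternion Finset

noncomputable def β (n : ℕ) : ℝ := if Odd n then n + 2 else n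

noncomputable def P : ℕ → Polynomial ℝ
  | 0 => 1
  | 1 => X
  | (n + 2) => X * P (n + 1) + C (β (n + 1)) * P n

/-- Squared norms: `h n = n!(n+2)` for odd `n`, `(n+1)!` for even `n`. -/
noncomputable def h (n : ℕ) : ℝ :=
  if Odd n then (n.factorial : ℝ) * (n + 2) else ((n + 1).factorial : ℝ)

/-- The kernel `K_n(x,y) = Σ_{k=0}^{n} P_k(x) conj(P_k(y)) / h_k`. -/
noncomputable def K (n : ℕ) (x y : ℍ[ℝ]) : ℍ[ℝ] :=
  ∑ k ∈ range (n + 1), (h k)⁻¹ • (aeval x (P k) * star (aeval y (P k)))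

lemma h_pos (n : ℕ) : 0 < h n := by
  unfold h; split <;> positivity

lemma h_ne (n : ℕ) : h n ≠ 0 := (h_pos n).ne'

lemma β_succ_pos (n : ℕ) : 0 < β (n + 1) := by
  unfold β; split <;> positivity

lemma h_succ (n : ℕ) : h (n + 1) = β (n + 1) * h n := by
  unfold h β
  rcases Nat.even_or_odd n with he | ho
  · have h1 : Odd (n + 1) := Even.add_one he
    have h2 : ¬ Odd n := by simpa [Nat.not_odd_iff_even] using he
    simp only [h1, h2, if_true, if_false]
    push_cast
    ring
  · have h1 : ¬ Odd (n + 1) := by simpa [Nat.even_add_one, Nat.not_even_iff_odd] using ho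
    simp only [h1, ho, if_true, if_false, Nat.factorial_succ]
    push_cast
    ring

lemma hinv_succ (n : ℕ) : (h (n + 1))⁻¹ * β (n + 1) = (h n)⁻¹ := by
  have hb := (β_succ_pos n).ne'
  have hn := h_ne n
  rw [h_succ]
  field_simp

lemma aeval_P_succ_succ (z : ℍ[ℝ]) (n : ℕ) :
    aeval z (P (n + 2)) = z * aeval z (P (n + 1)) + β (n + 1) • aeval z (P n) := by
  show aeval z (X * P (n + 1) + C (β (n + 1)) * P n) = _
  simp [Algebra.smul_def]

theorem stmt12 (n : ℕ) (x y : ℍ[ℝ]) (hx : x.re = 0) (hy : y.re = 0) :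
    x * K n x y + K n x y * star y
      = (h n)⁻¹ • (aeval x (P (n + 1)) * star (aeval y (P n))
          + aeval x (P n) * star (aeval y (P (n + 1)))) := by
  induction n with
  | zero =>
    have h0 : h 0 = 1 := by norm_num [h]
    simp [K, P, h0]
  | succ n ih =>
    have e1 : x * aeval x (P (n + 1))
        = aeval x (P (n + 2)) - β (n + 1) • aeval x (P n) := by
      rw [aeval_P_succ_succ x n]; abel
    have e2 : star (aeval y (P (n + 1))) * star y
        = star (aeval y (P (n + 2))) - β (n + 1) • star (aeval y (P n)) := by
      rw [← star_mul,
        show y * aeval y (P (n + 1))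
            = aeval y (P (n + 2)) - β (n + 1) • aeval y (P n) from by
          rw [aeval_P_succ_succ y n]; abel,
        star_sub, Quaternion.star_smul]
    have hK : K (n + 1) x y = K n x y
        + (h (n + 1))⁻¹ • (aeval x (P (n + 1)) * star (aeval y (P (n + 1)))) := by
      simp [K, Finset.sum_range_succ]
    set a0 := aeval x (P n)
    set a1 := aeval x (P (n + 1))
    set a2 := aeval x (P (n + 2))
    set b0 := star (aeval y (P n))
    set b1 := star (aeval y (P (n + 1)))
    set b2 := star (aeval y (P (n + 2)))
    have key : x * ((h (n + 1))⁻¹ • (a1 * b1))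
        + ((h (n + 1))⁻¹ • (a1 * b1)) * star y
        = (h (n + 1))⁻¹ • (a2 * b1 + a1 * b2)
          - (h n)⁻¹ • (a1 * b0 + a0 * b1) := by
      rw [mul_smul_comm, smul_mul_assoc, ← smul_add, ← mul_assoc, e1, mul_assoc, e2,
        ← hinv_succ n, mul_smul, ← smul_sub]
      congr 1
      rw [sub_mul, mul_sub, smul_mul_assoc, mul_smul_comm, smul_add]
      abel
    rw [hK, mul_add, add_mul, show
        x * K n x y + x * ((h (n + 1))⁻¹ • (a1 * b1))
          + (K n x y * star y + (h (n + 1))⁻¹ • (a1 * b1) * star y)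
        = (x * K n x y + K n x y * star y)
          + (x * ((h (n + 1))⁻¹ • (a1 * b1))
            + ((h (n + 1))⁻¹ • (a1 * b1)) * star y) by abel,
      ih, key]
    abel
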